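/- arXiv:2307.07394 — 3 statements merged into one kernel-verified Lean document; each statement's English description precedes it below -/
import Mathlib

section
/- The tensor rank of the three-party W state |W⟩ = |100⟩ + |010⟩ + |001⟩ in (ℂ²)⊗³ equals 3; that is, W can be written as a sum of 3 simple tensors but not as a sum of 2 simple tensors. -/
open TensorProduct

/-- The standard basis vector `|a⟩` of `ℂ²`. -/
noncomputable def ket (a : Fin 2) : Fin 2 → ℂ := Pi.single a 1

/-- The three-party W state `|100⟩ + |010⟩ + |001⟩` in `(ℂ²)⊗³`. -/
noncomputable def Wstate : (Fin 2 → ℂ) ⊗[ℂ] ((Fin 2 → ℂ) ⊗[ℂ] (Fin 2 → ℂ)) :=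
  ket 1 ⊗ₜ[ℂ] (ket 0 ⊗ₜ[ℂ] ket 0) + ket 0 ⊗ₜ[ℂ] (ket 1 ⊗ₜ[ℂ] ket 0) +
    ket 0 ⊗ₜ[ℂ] (ket 0 ⊗ₜ[ℂ] ket 1)

noncomputable def ev (x : Fin 2) : (Fin 2 → ℂ) →ₗ[ℂ] ℂ := LinearMap.proj x

noncomputable def coordInner (y z : Fin 2) :
    ((Fin 2 → ℂ) ⊗[ℂ] (Fin 2 → ℂ)) →ₗ[ℂ] ℂ :=
  TensorProduct.lift ((LinearMap.mul ℂ ℂ).compl₁₂ (ev y) (ev z))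

noncomputable def coord (x y z : Fin 2) :
    ((Fin 2 → ℂ) ⊗[ℂ] ((Fin 2 → ℂ) ⊗[ℂ] (Fin 2 → ℂ))) →ₗ[ℂ] ℂ :=
  TensorProduct.lift ((LinearMap.mul ℂ ℂ).compl₁₂ (ev x) (coordInner y z))

lemma coord_tmul (x y z : Fin 2) (a b c : Fin 2 → ℂ) :
    coord x y z (a ⊗ₜ[ℂ] (b ⊗ₜ[ℂ] c)) = a x * (b y * c z) := by
  simp [coord, coordInner, ev]

lemma coord_W (x y z : Fin 2) :
    coord x y z Wstate =
      (if x = 1 ∧ y = 0 ∧ z = 0 then 1 else 0) +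
      (if x = 0 ∧ y = 1 ∧ z = 0 then 1 else 0) +
      (if x = 0 ∧ y = 0 ∧ z = 1 then 1 else 0) := by
  simp only [Wstate, map_add, coord_tmul, ket, Pi.single_apply]
  fin_cases x <;> fin_cases y <;> fin_cases z <;> norm_num

/-- The tensor rank of the W state is exactly 3: it is a sum of 3 simple tensors,
but not a sum of 2 simple tensors. -/
theorem W_tensor_rank_eq_three :
    (∃ a b c : Fin 3 → (Fin 2 → ℂ),
        Wstate = ∑ i, a i ⊗ₜ[ℂ] (b i ⊗ₜ[ℂ] c i)) ∧
    ¬ (∃ a b c : Fin 2 → (Fin 2 → ℂ),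
        Wstate = ∑ i, a i ⊗ₜ[ℂ] (b i ⊗ₜ[ℂ] c i)) := by
  constructor
  · refine ⟨![ket 1, ket 0, ket 0], ![ket 0, ket 1, ket 0], ![ket 0, ket 0, ket 1], ?_⟩
    simp [Wstate, Fin.sum_univ_three]
  · rintro ⟨a, b, c, h⟩
    have key : ∀ x y z : Fin 2,
        a 0 x * (b 0 y * c 0 z) + a 1 x * (b 1 y * c 1 z) =
        (if x = 1 ∧ y = 0 ∧ z = 0 then 1 else 0) +
        (if x = 0 ∧ y = 1 ∧ z = 0 then 1 else 0) +
        (if x = 0 ∧ y = 0 ∧ z = 1 then 1 else 0) := by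
      intro x y z
      have := congrArg (coord x y z) h
      rw [coord_W] at this
      simpa [Fin.sum_univ_two, coord_tmul] using this.symm
    -- name the scalars
    set u1 := a 0 0; set u2 := a 1 0; set v1 := a 0 1; set v2 := a 1 1
    set b10 := b 0 0; set b11 := b 0 1; set b20 := b 1 0; set b21 := b 1 1
    set c10 := c 0 0; set c11 := c 0 1; set c20 := c 1 0; set c21 := c 1 1
    have e00_0 : u1 * (b10 * c10) + u2 * (b20 * c20) = 0 := by simpa using key 0 0 0
    have e01_0 : u1 * (b10 * c11) + u2 * (b20 * c21) = 1 := by simpa using key 0 0 1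
    have e10_0 : u1 * (b11 * c10) + u2 * (b21 * c20) = 1 := by simpa using key 0 1 0
    have e11_0 : u1 * (b11 * c11) + u2 * (b21 * c21) = 0 := by simpa using key 0 1 1
    have e00_1 : v1 * (b10 * c10) + v2 * (b20 * c20) = 1 := by simpa using key 1 0 0
    have e01_1 : v1 * (b10 * c11) + v2 * (b20 * c21) = 0 := by simpa using key 1 0 1
    have e10_1 : v1 * (b11 * c10) + v2 * (b21 * c20) = 0 := by simpa using key 1 1 0
    have e11_1 : v1 * (b11 * c11) + v2 * (b21 * c21) = 0 := by simpa using key 1 1 1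
    set L : ℂ := v2 * u1 - u2 * v1 with hL
    have h00 : L * (b10 * c10) = -u2 := by linear_combination v2 * e00_0 - u2 * e00_1
    have h01 : L * (b10 * c11) = v2 := by linear_combination v2 * e01_0 - u2 * e01_1
    have h10 : L * (b11 * c10) = v2 := by linear_combination v2 * e10_0 - u2 * e10_1
    have h11 : L * (b11 * c11) = 0 := by linear_combination v2 * e11_0 - u2 * e11_1
    have hv2 : v2 = 0 := by
      have : v2 * v2 = 0 := by
        linear_combination (-(L * (b11 * c10))) * h01 - v2 * h10 + (L * (b10 * c10)) * h11
      exact mul_self_eq_zero.mp this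
    set M : ℂ := v1 * u2 - u1 * v2 with hM
    have g00 : M * (b20 * c20) = -u1 := by linear_combination v1 * e00_0 - u1 * e00_1
    have g01 : M * (b20 * c21) = v1 := by linear_combination v1 * e01_0 - u1 * e01_1
    have g10 : M * (b21 * c20) = v1 := by linear_combination v1 * e10_0 - u1 * e10_1
    have g11 : M * (b21 * c21) = 0 := by linear_combination v1 * e11_0 - u1 * e11_1
    have hv1 : v1 = 0 := by
      have : v1 * v1 = 0 := by
        linear_combination (-(M * (b21 * c20))) * g01 - v1 * g10 + (M * (b20 * c20)) * g11
      exact mul_self_eq_zero.mp this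
    have : (0 : ℂ) = 1 := by linear_combination e00_1 - (b10 * c10) * hv1 - (b20 * c20) * hv2
    exact zero_ne_one this
end

section
/- If M : V₁⊗V₂ → W₁⊗W₂ is a linear map, φ₁ ∈ V₁⊗U₁ and φ₂ ∈ V₂⊗U₂ are tensors whose partial contractions span all of V₁ and V₂ respectively (conciseness), ψ₁ ∈ W₁⊗U₁, ψ₂ ∈ W₂⊗U₂, and (M ⊗ 1_{U₁} ⊗ 1_{U₂})(φ₁ ⊗ φ₂) = ψ₁ ⊗ ψ₂ (after appropriate regrouping of factors), then M factors as a tensor product M = M₁ ⊗ M₂ with M_i : V_i → W_i. -/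
open TensorProduct

/-- Contraction of a tensor `φ ∈ V ⊗ U` with a functional `f ∈ U*`, giving an
element of `V`. -/
noncomputable def ctrRight {V U : Type*} [AddCommGroup V] [Module ℂ V]
    [AddCommGroup U] [Module ℂ U] (φ : V ⊗[ℂ] U) (f : Module.Dual ℂ U) : V :=
  TensorProduct.rid ℂ V ((LinearMap.lTensor V f) φ)

/-- `φ ∈ V ⊗ U` is concise in `V` if its partial contractions span all of `V`
(equivalently, the induced map `U* → V` is surjective). -/
def ConciseFst {V U : Type*} [AddCommGroup V] [Module ℂ V] [AddCommGroup U]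
    [Module ℂ U] (φ : V ⊗[ℂ] U) : Prop :=
  Submodule.span ℂ (Set.range fun f : Module.Dual ℂ U => ctrRight φ f) = ⊤

/-- Simultaneous contraction with `f ⊗ g` on the second big factor. -/
noncomputable def ctr2 {A B U₁ U₂ : Type*} [AddCommGroup A] [Module ℂ A]
    [AddCommGroup B] [Module ℂ B] [AddCommGroup U₁] [Module ℂ U₁]
    [AddCommGroup U₂] [Module ℂ U₂]
    (f : Module.Dual ℂ U₁) (g : Module.Dual ℂ U₂) :
    (A ⊗[ℂ] B) ⊗[ℂ] (U₁ ⊗[ℂ] U₂) →ₗ[ℂ] A ⊗[ℂ] B :=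
  (TensorProduct.rid ℂ (A ⊗[ℂ] B)).toLinearMap ∘ₗ
    LinearMap.lTensor (A ⊗[ℂ] B)
      ((TensorProduct.lid ℂ ℂ).toLinearMap ∘ₗ TensorProduct.map f g)

lemma ctrRight_add {V U : Type*} [AddCommGroup V] [Module ℂ V]
    [AddCommGroup U] [Module ℂ U] (φ φ' : V ⊗[ℂ] U) (f : Module.Dual ℂ U) :
    ctrRight (φ + φ') f = ctrRight φ f + ctrRight φ' f := by
  simp [ctrRight]

lemma ctrRight_tmul {V U : Type*} [AddCommGroup V] [Module ℂ V]
    [AddCommGroup U] [Module ℂ U] (v : V) (u : U) (f : Module.Dual ℂ U) :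
    ctrRight (v ⊗ₜ[ℂ] u) f = f u • v := by
  simp [ctrRight]

lemma ctr2_ttt {A B U₁ U₂ : Type*} [AddCommGroup A] [Module ℂ A]
    [AddCommGroup B] [Module ℂ B] [AddCommGroup U₁] [Module ℂ U₁]
    [AddCommGroup U₂] [Module ℂ U₂]
    (f : Module.Dual ℂ U₁) (g : Module.Dual ℂ U₂)
    (φ₁ : A ⊗[ℂ] U₁) (φ₂ : B ⊗[ℂ] U₂) :
    ctr2 f g (tensorTensorTensorComm ℂ A U₁ B U₂ (φ₁ ⊗ₜ[ℂ] φ₂)) =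
      ctrRight φ₁ f ⊗ₜ[ℂ] ctrRight φ₂ g := by
  induction φ₁ using TensorProduct.induction_on with
  | zero => simp [ctrRight]
  | add x y hx hy =>
      simp only [TensorProduct.add_tmul, map_add, hx, hy, ctrRight_add]
  | tmul v u =>
      induction φ₂ using TensorProduct.induction_on with
      | zero => simp [ctrRight]
      | add x y hx hy =>
          simp only [TensorProduct.tmul_add, map_add, hx, hy, ctrRight_add]
      | tmul w u' =>
          simp [ctr2, ctrRight, TensorProduct.smul_tmul', smul_smul,
            mul_comm (f u) (g u')]

lemma ctr2_comm {V₁ V₂ U₁ U₂ W₁ W₂ : Type*}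
    [AddCommGroup V₁] [Module ℂ V₁] [AddCommGroup V₂] [Module ℂ V₂]
    [AddCommGroup U₁] [Module ℂ U₁] [AddCommGroup U₂] [Module ℂ U₂]
    [AddCommGroup W₁] [Module ℂ W₁] [AddCommGroup W₂] [Module ℂ W₂]
    (M : V₁ ⊗[ℂ] V₂ →ₗ[ℂ] W₁ ⊗[ℂ] W₂)
    (f : Module.Dual ℂ U₁) (g : Module.Dual ℂ U₂) :
    (ctr2 f g) ∘ₗ (TensorProduct.map M (LinearMap.id (R := ℂ) (M := U₁ ⊗[ℂ] U₂)))
      = M ∘ₗ (ctr2 f g) := by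
  apply TensorProduct.ext'
  intro x y
  simp [ctr2]

lemma exists_dual_one {W : Type*} [AddCommGroup W] [Module ℂ W] {b : W}
    (hb : b ≠ 0) : ∃ lam : Module.Dual ℂ W, lam b = 1 := by
  obtain ⟨f, hf⟩ : ∃ f : Module.Dual ℂ W, f b ≠ 0 := by
    by_contra hc
    push_neg at hc
    exact hb ((Module.forall_dual_apply_eq_zero_iff ℂ b).mp hc)
  exact ⟨(f b)⁻¹ • f, by simp [inv_mul_cancel₀ hf]⟩

lemma ext_of_span {V₁ V₂ W : Type*}
    [AddCommGroup V₁] [Module ℂ V₁] [AddCommGroup V₂] [Module ℂ V₂]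
    [AddCommGroup W] [Module ℂ W]
    (N N' : V₁ ⊗[ℂ] V₂ →ₗ[ℂ] W) (S₁ : Set V₁) (S₂ : Set V₂)
    (h₁ : Submodule.span ℂ S₁ = ⊤) (h₂ : Submodule.span ℂ S₂ = ⊤)
    (hs : ∀ v ∈ S₁, ∀ w ∈ S₂, N (v ⊗ₜ[ℂ] w) = N' (v ⊗ₜ[ℂ] w)) : N = N' := by
  have step1 : ∀ w ∈ S₂, ∀ v : V₁, N (v ⊗ₜ[ℂ] w) = N' (v ⊗ₜ[ℂ] w) := by
    intro w hw v
    have hv : v ∈ Submodule.span ℂ S₁ := h₁ ▸ Submodule.mem_top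
    induction hv using Submodule.span_induction with
    | mem x hx => exact hs x hx w hw
    | zero => simp
    | add x y _ _ hx hy => simp [TensorProduct.add_tmul, hx, hy]
    | smul c x _ hx => simp [← TensorProduct.smul_tmul', hx]
  apply TensorProduct.ext'
  intro v w
  have hw : w ∈ Submodule.span ℂ S₂ := h₂ ▸ Submodule.mem_top
  induction hw using Submodule.span_induction with
  | mem x hx => exact step1 x hx v
  | zero => simp
  | add x y _ _ hx hy => simp [TensorProduct.tmul_add, hx, hy]
  | smul c x _ hx => simp [TensorProduct.tmul_smul, hx]

/-- A local map on a shared vertex carrying a product of two concise edge tensors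
to a product of edge tensors must itself be a tensor product of maps. -/
theorem vertex_map_factors
    {V₁ V₂ U₁ U₂ W₁ W₂ : Type*}
    [AddCommGroup V₁] [Module ℂ V₁] [AddCommGroup V₂] [Module ℂ V₂]
    [AddCommGroup U₁] [Module ℂ U₁] [AddCommGroup U₂] [Module ℂ U₂]
    [AddCommGroup W₁] [Module ℂ W₁] [AddCommGroup W₂] [Module ℂ W₂]
    (M : V₁ ⊗[ℂ] V₂ →ₗ[ℂ] W₁ ⊗[ℂ] W₂)
    (φ₁ : V₁ ⊗[ℂ] U₁) (φ₂ : V₂ ⊗[ℂ] U₂)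
    (ψ₁ : W₁ ⊗[ℂ] U₁) (ψ₂ : W₂ ⊗[ℂ] U₂)
    (hφ₁ : ConciseFst φ₁) (hφ₂ : ConciseFst φ₂)
    (h : TensorProduct.map M LinearMap.id
          (tensorTensorTensorComm ℂ V₁ U₁ V₂ U₂ (φ₁ ⊗ₜ[ℂ] φ₂)) =
        tensorTensorTensorComm ℂ W₁ U₁ W₂ U₂ (ψ₁ ⊗ₜ[ℂ] ψ₂)) :
    ∃ (M₁ : V₁ →ₗ[ℂ] W₁) (M₂ : V₂ →ₗ[ℂ] W₂), M = TensorProduct.map M₁ M₂ := by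
  have hfg : ∀ (f : Module.Dual ℂ U₁) (g : Module.Dual ℂ U₂),
      M (ctrRight φ₁ f ⊗ₜ[ℂ] ctrRight φ₂ g) =
        ctrRight ψ₁ f ⊗ₜ[ℂ] ctrRight ψ₂ g := by
    intro f g
    have h2 := congrArg (ctr2 f g) h
    rw [ctr2_ttt] at h2
    have h3 := LinearMap.congr_fun (ctr2_comm M f g)
      (tensorTensorTensorComm ℂ V₁ U₁ V₂ U₂ (φ₁ ⊗ₜ[ℂ] φ₂))
    simp only [LinearMap.comp_apply] at h3
    rw [h3, ctr2_ttt] at h2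
    exact h2
  by_cases hb2 : ∀ g : Module.Dual ℂ U₂, ctrRight ψ₂ g = 0
  · refine ⟨0, 0, ext_of_span M _ _ _ hφ₁ hφ₂ ?_⟩
    rintro v ⟨f, rfl⟩ w ⟨g, rfl⟩
    simp [hfg f g, hb2 g]
  by_cases ha2 : ∀ f : Module.Dual ℂ U₁, ctrRight ψ₁ f = 0
  · refine ⟨0, 0, ext_of_span M _ _ _ hφ₁ hφ₂ ?_⟩
    rintro v ⟨f, rfl⟩ w ⟨g, rfl⟩
    simp [hfg f g, ha2 f]
  push_neg at hb2 ha2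
  obtain ⟨g₀, hg₀⟩ := hb2
  obtain ⟨f₀, hf₀⟩ := ha2
  obtain ⟨lam, hlam⟩ := exists_dual_one hg₀
  obtain ⟨mu, hmu⟩ := exists_dual_one hf₀
  refine ⟨((TensorProduct.rid ℂ W₁).toLinearMap ∘ₗ LinearMap.lTensor W₁ lam) ∘ₗ
      M ∘ₗ ((TensorProduct.mk ℂ V₁ V₂).flip (ctrRight φ₂ g₀)),
    ((TensorProduct.lid ℂ W₂).toLinearMap ∘ₗ LinearMap.rTensor W₂ mu) ∘ₗ
      M ∘ₗ (TensorProduct.mk ℂ V₁ V₂ (ctrRight φ₁ f₀)),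
    ext_of_span M _ _ _ hφ₁ hφ₂ ?_⟩
  rintro v ⟨f, rfl⟩ w ⟨g, rfl⟩
  rw [TensorProduct.map_tmul]
  simp only [LinearMap.comp_apply, LinearMap.flip_apply, TensorProduct.mk_apply]
  rw [hfg f g₀, hfg f₀ g, hfg f g]
  simp [hlam, hmu]
end

section
/- Generalized multiflattening lower bound: let φ ∈ H_A ⊗ H_B ⊗ H_{C₁} ⊗ ... ⊗ H_{C_m} have a decomposition as a sum of r tensors that are simple with respect to the factorization A, B, C₁, ..., C_m. For linear maps P_i : H_{C_i} → H_{X_i} ⊗ H_{Y_i}, define CR(P_i) as the maximum Schmidt rank of P_i(c) over vectors c ∈ H_{C_i}, and let φ^{(P)} = (1_{AB} ⊗ P₁ ⊗ ... ⊗ P_m)(φ) viewed as a 2-tensor between A X₁...X_m and B Y₁...Y_m. Then rk(φ^{(P)}) ≤ r · Π_{i=1}^m CR(P_i); equivalently R(φ) ≥ rk(φ^{(P)}) / Π_i CR(P_i). -/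
/-!
A matrix has rank at most `k` exactly when it is a sum of `k` outer products `f s ⊗ g s`.
Such decompositions add under sums and multiply under (iterated) Kronecker products, so ranks
are subadditive and submultiplicative. The multiflattening is linear in `φ` and sends the simple
tensor `a ⊗ b ⊗ c₁ ⊗ ⋯ ⊗ c_m` to the Kronecker product of `a bᵀ` (rank `≤ 1`) with the matrices
of `Pᵢ(cᵢ)` (rank `≤ CR(Pᵢ)`), whence the bound.
-/

/-- The commutative rank `CR(P)` of a generalized flattening map
`P : H_C → H_X ⊗ H_Y` (written in coordinates): the maximum Schmidt rank of `P c`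
over vectors `c ∈ H_C`. -/
noncomputable def commRank {γ δ ρ : Type*} [Fintype δ] [Fintype ρ]
    (P : (γ → ℂ) →ₗ[ℂ] (δ × ρ → ℂ)) : ℕ :=
  ⨆ c : γ → ℂ, (Matrix.of fun (d : δ) (r : ρ) => P c (d, r)).rank

/-- The generalized multiflattening of `φ ∈ H_A ⊗ H_B ⊗ ⨂ᵢ H_{Cᵢ}` by the maps
`Pᵢ : H_{Cᵢ} → H_{Xᵢ} ⊗ H_{Yᵢ}`, viewed (in coordinates) as a matrix between
`A X₁…X_m` and `B Y₁…Y_m`. -/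
noncomputable def multiFlattening {ι α β : Type*} [Fintype ι] [DecidableEq ι] {γ δ ρ : ι → Type*}
    [∀ i, Fintype (γ i)] [∀ i, DecidableEq (γ i)]
    (P : ∀ i, (γ i → ℂ) →ₗ[ℂ] (δ i × ρ i → ℂ))
    (φ : α → β → (∀ i, γ i) → ℂ) :
    Matrix (α × ∀ i, δ i) (β × ∀ i, ρ i) ℂ :=
  Matrix.of fun p q =>
    ∑ g : ∀ i, γ i, (∏ i, P i (Pi.single (g i) 1) (p.2 i, q.2 i)) * φ p.1 q.1 g

open Finset Matrix
open scoped Kronecker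

namespace Matrix

variable {m n S : Type*}

theorem rank_le_card_of_eq_sum {R : Type*} [CommSemiring R] [StrongRankCondition R]
    [Fintype n] [Fintype S] (A : Matrix m n R) (f : S → m → R) (g : S → n → R)
    (h : ∀ p q, A p q = ∑ s, f s p * g s q) : A.rank ≤ Fintype.card S := by
  have hA : A = (of fun p s => f s p) * of g := by
    ext p q
    simp [mul_apply, h]
  rw [hA]
  exact (rank_mul_le_right _ _).trans (rank_le_card_height _)

variable {K : Type*} [Field K]

theorem exists_eq_sum_of_rank [Fintype n] (A : Matrix m n K) :
    ∃ (f : Fin A.rank → m → K) (g : Fin A.rank → n → K),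
      ∀ p q, A p q = ∑ s, f s p * g s q := by
  set W : Submodule K (m → K) := Submodule.span K (Set.range A.col)
  have : FiniteDimensional K W := FiniteDimensional.span_of_finite K (Set.finite_range _)
  let e : Module.Basis (Fin A.rank) K W :=
    (Module.finBasis K W).reindex (finCongr A.rank_eq_finrank_span_cols.symm)
  let col (q : n) : W := ⟨A.col q, Submodule.subset_span ⟨q, rfl⟩⟩
  refine ⟨fun s => e s, fun s q => e.repr (col q) s, fun p q => ?_⟩
  change (col q : m → K) p = _
  conv_lhs => rw [← e.sum_repr (col q)]
  simp only [Submodule.coe_sum, Submodule.coe_smul, Finset.sum_apply, Pi.smul_apply, smul_eq_mul,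
    mul_comm]

theorem rank_sum_le {T : Type*} [Fintype T] [Fintype n] (A : T → Matrix m n K) :
    (∑ t, A t).rank ≤ ∑ t, (A t).rank := by
  choose f g hfg using fun t => exists_eq_sum_of_rank (A t)
  simpa using rank_le_card_of_eq_sum (∑ t, A t)
    (fun s : Σ t, Fin (A t).rank => f s.1 s.2) (fun s => g s.1 s.2)
    fun p q => by simp [Fintype.sum_sigma, Matrix.sum_apply, hfg]

theorem rank_kronecker_le {l m n p : Type*} [Fintype m] [Fintype p]
    (A : Matrix l m K) (B : Matrix n p K) : (A ⊗ₖ B).rank ≤ A.rank * B.rank := by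
  obtain ⟨f, g, hA⟩ := exists_eq_sum_of_rank A
  obtain ⟨f', g', hB⟩ := exists_eq_sum_of_rank B
  simpa using rank_le_card_of_eq_sum (A ⊗ₖ B)
    (fun (s : Fin A.rank × Fin B.rank) x => f s.1 x.1 * f' s.2 x.2)
    (fun s y => g s.1 y.1 * g' s.2 y.2) fun x y => by
      rw [kronecker_apply, hA, hB, Finset.sum_mul_sum, Fintype.sum_prod_type]
      exact sum_congr rfl fun _ _ => sum_congr rfl fun _ _ => by ring

def piKronecker {ι R : Type*} [Fintype ι] [CommMonoid R] {δ ρ : ι → Type*}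
    (M : ∀ i, Matrix (δ i) (ρ i) R) : Matrix (∀ i, δ i) (∀ i, ρ i) R :=
  of fun d x => ∏ i, M i (d i) (x i)

theorem rank_piKronecker_le {ι : Type*} [Fintype ι] [DecidableEq ι] {δ ρ : ι → Type*}
    [∀ i, Fintype (ρ i)] (M : ∀ i, Matrix (δ i) (ρ i) K) :
    (piKronecker M).rank ≤ ∏ i, (M i).rank := by
  choose f g hM using fun i => exists_eq_sum_of_rank (M i)
  simpa using rank_le_card_of_eq_sum (piKronecker M)
    (fun (s : ∀ i, Fin (M i).rank) d => ∏ i, f i (s i) (d i)) (fun s x => ∏ i, g i (s i) (x i))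
    fun d x => by
      simp only [piKronecker, of_apply, hM, Fintype.prod_sum, ← Finset.prod_mul_distrib]

end Matrix

theorem rank_le_commRank {γ δ ρ : Type*} [Fintype δ] [Fintype ρ]
    (P : (γ → ℂ) →ₗ[ℂ] (δ × ρ → ℂ)) (c : γ → ℂ) :
    (of fun (d : δ) (r : ρ) => P c (d, r)).rank ≤ commRank P :=
  le_ciSup (f := fun c => (of fun (d : δ) (r : ρ) => P c (d, r)).rank)
    ⟨_, Set.forall_mem_range.2 fun _ => rank_le_card_width _⟩ c

section MultiFlattening

variable {ι α β : Type*} [Fintype ι] [DecidableEq ι] {γ δ ρ : ι → Type*}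
  [∀ i, Fintype (γ i)] [∀ i, DecidableEq (γ i)] (P : ∀ i, (γ i → ℂ) →ₗ[ℂ] (δ i × ρ i → ℂ))

theorem multiFlattening_sum {T : Type*} [Fintype T] (φ : T → α → β → (∀ i, γ i) → ℂ) :
    multiFlattening P (∑ t, φ t) = ∑ t, multiFlattening P (φ t) := by
  ext p q
  simp only [multiFlattening, of_apply, Matrix.sum_apply, Finset.sum_apply, mul_sum]
  exact sum_comm

theorem multiFlattening_simple (a : α → ℂ) (b : β → ℂ) (c : ∀ i, γ i → ℂ) :
    multiFlattening P (fun x y g => a x * b y * ∏ i, c i (g i)) =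
      vecMulVec a b ⊗ₖ piKronecker fun i => of fun d x => P i (c i) (d, x) := by
  have expand (i : ι) (u : δ i × ρ i) : P i (c i) u = ∑ y, c i y * P i (Pi.single y 1) u := by
    conv_lhs => rw [pi_eq_sum_univ' (c i), map_sum]
    simp
  ext p q
  rw [kronecker_apply, vecMulVec_apply]
  simp only [multiFlattening, piKronecker, of_apply, expand, Fintype.prod_sum, mul_sum]
  exact sum_congr rfl fun _ _ => by rw [prod_mul_distrib]; ring

theorem rank_multiFlattening_simple_le [Fintype β] [∀ i, Fintype (δ i)] [∀ i, Fintype (ρ i)]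
    (a : α → ℂ) (b : β → ℂ) (c : ∀ i, γ i → ℂ) :
    (multiFlattening P fun x y g => a x * b y * ∏ i, c i (g i)).rank ≤ ∏ i, commRank (P i) := by
  rw [multiFlattening_simple]
  calc _ ≤ (vecMulVec a b).rank * ∏ i, (of fun d x => P i (c i) (d, x)).rank :=
        (rank_kronecker_le _ _).trans (Nat.mul_le_mul_left _ (rank_piKronecker_le _))
    _ ≤ 1 * ∏ i, commRank (P i) :=
        Nat.mul_le_mul (rank_vecMulVec_le a b) (prod_le_prod' fun i _ => rank_le_commRank _ _)
    _ = ∏ i, commRank (P i) := one_mul _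

end MultiFlattening

theorem multiflattening_rank_bound_general {ι α β : Type*} [Fintype ι] [Fintype β]
    {γ δ ρ : ι → Type*} [∀ i, Fintype (γ i)] [∀ i, DecidableEq (γ i)]
    [∀ i, Fintype (δ i)] [∀ i, Fintype (ρ i)] [DecidableEq ι]
    (P : ∀ i, (γ i → ℂ) →ₗ[ℂ] (δ i × ρ i → ℂ))
    (φ : α → β → (∀ i, γ i) → ℂ) (r : ℕ)
    (a : Fin r → α → ℂ) (b : Fin r → β → ℂ) (c : Fin r → ∀ i, γ i → ℂ)
    (hφ : ∀ x y g, φ x y g = ∑ t, a t x * b t y * ∏ i, c t i (g i)) :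
    (multiFlattening P φ).rank ≤ r * ∏ i, commRank (P i) := by
  have hφ' : φ = ∑ t, fun x y g => a t x * b t y * ∏ i, c t i (g i) := by
    funext x y g
    simp [hφ]
  calc (multiFlattening P φ).rank
      ≤ ∑ t, (multiFlattening P fun x y g => a t x * b t y * ∏ i, c t i (g i)).rank := by
        rw [hφ', multiFlattening_sum]
        exact rank_sum_le _
    _ ≤ ∑ _t : Fin r, ∏ i, commRank (P i) :=
        sum_le_sum fun t _ => rank_multiFlattening_simple_le P (a t) (b t) (c t)
    _ = r * ∏ i, commRank (P i) := by simp

/-- Generalized multiflattening lower bound: if `φ` is a sum of `r` simple tensors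
with respect to the factorization `A, B, C₁, …, C_m`, then the rank of its
generalized multiflattening is at most `r · ∏ᵢ CR(Pᵢ)`; equivalently
`R(φ) ≥ rk(φ^{(P)}) / ∏ᵢ CR(Pᵢ)`. -/
theorem multiflattening_rank_bound {ι α β : Type*} [Fintype ι] [Fintype α] [Fintype β]
    {γ δ ρ : ι → Type*} [∀ i, Fintype (γ i)] [∀ i, DecidableEq (γ i)]
    [∀ i, Fintype (δ i)] [∀ i, Fintype (ρ i)] [DecidableEq ι]
    (P : ∀ i, (γ i → ℂ) →ₗ[ℂ] (δ i × ρ i → ℂ))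
    (φ : α → β → (∀ i, γ i) → ℂ) (r : ℕ)
    (a : Fin r → α → ℂ) (b : Fin r → β → ℂ) (c : Fin r → ∀ i, γ i → ℂ)
    (hφ : ∀ x y g, φ x y g = ∑ t, a t x * b t y * ∏ i, c t i (g i)) :
    (multiFlattening P φ).rank ≤ r * ∏ i, commRank (P i) :=
  multiflattening_rank_bound_general P φ r a b c hφ
end
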